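/- arXiv:2307.15134 — 2 statements merged into one kernel-verified Lean document; each statement's English description precedes it below -/
import Mathlib

section
/- Let μ and ν be finite Borel measures on a metric space (X,d), with ν(X) < ∞. Define the maximal function M_ν(x) := sup_{0<r<1} ν(B̄_r(x)) / μ(B̄_{5r}(x)) for x ∈ supp μ (with the convention that the ratio is ∞ when the denominator vanishes). Then μ({ x ∈ supp μ : M_ν(x) = ∞ }) = 0. -/
open MeasureTheory

/-- Vitali covering argument: for finite Borel measures `μ, ν` on a metric space, the
maximal ratio `M_ν(x) = sup_{0<r<1} ν(B̄_r(x))/μ(B̄_{5r}(x))` is finite at `μ`-a.e. point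
of the support of `μ`; i.e. the set where it is infinite is `μ`-null. -/
theorem stmt4 {X : Type*} [MetricSpace X] [MeasurableSpace X] [BorelSpace X]
    (μ ν : Measure X) [IsFiniteMeasure μ] [IsFiniteMeasure ν] :
    μ {x | (∀ r : ℝ, 0 < r → 0 < μ (Metric.ball x r)) ∧
        ∀ K : ℝ, 0 ≤ K → ∃ r ∈ Set.Ioo (0 : ℝ) 1,
          ENNReal.ofReal K * μ (Metric.closedBall x (5 * r))
            < ν (Metric.closedBall x r)} = 0 := by
  set E : Set X := {x | (∀ r : ℝ, 0 < r → 0 < μ (Metric.ball x r)) ∧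
        ∀ K : ℝ, 0 ≤ K → ∃ r ∈ Set.Ioo (0 : ℝ) 1,
          ENNReal.ofReal K * μ (Metric.closedBall x (5 * r))
            < ν (Metric.closedBall x r)} with hE
  -- Main claim: for every K > 0, K * μ E ≤ ν univ.
  have main : ∀ K : ℝ, 0 < K → ENNReal.ofReal K * μ E ≤ ν Set.univ := by
    intro K hK
    -- choose radii
    choose r hmem hlt using fun x : E => x.2.2 K hK.le
    obtain ⟨u, -, hu_disj, hu_cov⟩ :=
      Vitali.exists_disjoint_subfamily_covering_enlargement_closedBall
        (Set.univ : Set E) (fun a => (a : X)) r 1 (fun a _ => (hmem a).2.le) 5 (by norm_num)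
    -- each ball in the family has positive ν-measure
    have hpos : ∀ b : E, 0 < ν (Metric.closedBall (b : X) (r b)) := by
      intro b
      refine lt_of_le_of_lt ?_ (hlt b)
      have h1 : 0 < μ (Metric.ball (b : X) (5 * r b)) :=
        b.2.1 (5 * r b) (by have := (hmem b).1; positivity)
      have h2 : 0 < μ (Metric.closedBall (b : X) (5 * r b)) :=
        lt_of_lt_of_le h1 (measure_mono Metric.ball_subset_closedBall)
      positivity
    -- countability of u
    have hu_cnt : u.Countable := by
      have h := MeasureTheory.Measure.countable_meas_pos_of_disjoint_iUnion (μ := ν)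
        (As := fun b : u => Metric.closedBall ((b : E) : X) (r b))
        (fun b => measurableSet_closedBall)
        (fun i j hij => hu_disj i.2 j.2 (fun h => hij (Subtype.ext h)))
      have heq : {i : u | 0 < ν (Metric.closedBall ((i : E) : X) (r i))} = Set.univ :=
        Set.eq_univ_of_forall fun i => hpos i
      rw [heq] at h
      have : Countable u := Set.countable_univ_iff.mp h
      exact Set.countable_coe_iff.mp this
    -- E is covered by the 5-enlargements
    have hcov : E ⊆ ⋃ b ∈ u, Metric.closedBall ((b : X)) (5 * r b) := by
      intro y hy
      obtain ⟨b, hb, hsub⟩ := hu_cov ⟨y, hy⟩ (Set.mem_univ _)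
      exact Set.mem_biUnion hb
        (hsub (Metric.mem_closedBall_self (hmem ⟨y, hy⟩).1.le))
    calc ENNReal.ofReal K * μ E
        ≤ ENNReal.ofReal K * μ (⋃ b ∈ u, Metric.closedBall ((b : X)) (5 * r b)) := by
          exact mul_le_mul_right (measure_mono hcov) _
      _ ≤ ENNReal.ofReal K * ∑' b : u, μ (Metric.closedBall (((b : E) : X)) (5 * r b)) := by
          exact mul_le_mul_right (measure_biUnion_le μ hu_cnt _) _
      _ = ∑' b : u, ENNReal.ofReal K * μ (Metric.closedBall (((b : E) : X)) (5 * r b)) :=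
          ENNReal.tsum_mul_left.symm
      _ ≤ ∑' b : u, ν (Metric.closedBall (((b : E) : X)) (r b)) :=
          ENNReal.tsum_le_tsum fun b => (hlt b).le
      _ = ν (⋃ b ∈ u, Metric.closedBall ((b : X)) (r b)) :=
          (measure_biUnion hu_cnt hu_disj fun b _ => measurableSet_closedBall).symm
      _ ≤ ν Set.univ := measure_mono (Set.subset_univ _)
  -- conclude
  by_contra h
  have hEpos : 0 < μ E := pos_iff_ne_zero.mpr h
  have hEfin : μ E ≠ ⊤ := measure_ne_top μ E
  have hdiv : ν Set.univ / μ E ≠ ⊤ :=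
    (ENNReal.div_lt_top (measure_ne_top ν _) hEpos.ne').ne
  obtain ⟨n, hn⟩ := ENNReal.exists_nat_gt hdiv
  have h1 : ν Set.univ < ((n + 1 : ℕ) : ENNReal) * μ E := by
    rw [← ENNReal.div_lt_iff (Or.inl hEpos.ne') (Or.inl hEfin)]
    exact hn.trans_le (by exact_mod_cast Nat.le_succ n)
  have h2 := main ((n + 1 : ℕ) : ℝ) (by positivity)
  rw [ENNReal.ofReal_natCast] at h2
  exact absurd h2 (not_le.mpr h1)
end

section
/- Let μ be a Radon measure on ℝⁿ, p a point, and suppose the upper density bound μ(B_r(p)) ≤ Λ r^{n−2} holds for all r ∈ (0, r₀]. Suppose moreover that the averaged Gaussian density Θ̃(r) := (4π r²)^{-(n-2)/2} ∫ e^{-|x−p|²/(4r²)} dμ(x) has a limit θ as r → 0, with θ ≥ c > 0. Then the Euclidean lower density is bounded below: liminf_{r→0} μ(B_r(p)) / r^{n−2} ≥ c', for some c' > 0 depending only on n, Λ, c. -/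
/-!
Split `∫ exp (-|x - p|² / 4r²) dμ` at the radius `K r`. On the ball the integrand is at most `1`,
so that part is at most `μ(B_{Kr}(p))`. Outside it, `exp (-t² / 4r²) ≤ exp (1 - t / r)`, and the
upper bound `μ(B_s(p)) ≤ Λ s^(n-2)` on the annuli `k r ≤ |x - p| < (k + 1) r` bounds the
contribution of `r₀ > |x - p| ≥ K r` by `Λ e² r^(n-2) ∑_{j > K} j^(n-2) e^(-j)`. The region
`|x - p| ≥ r₀` contributes at most `μ(ℝⁿ) exp (-r₀² / 4r²) = o(r^(n-2))`. The Gaussian density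
tends to `θ ≥ c`, so the whole integral is at least `(c / 2) r^(n-2)` for small `r`. Once `K` is
chosen, depending only on `n`, `Λ` and `c`, so that the tail series is small, this forces
`μ(B_{Kr}(p)) ≥ (c / 4) r^(n-2)`, i.e. `c' = c / (4 K^(n-2))`.
-/

open MeasureTheory Filter Metric Set Real Topology
open scoped ENNReal

section Annuli

variable {X : Type*} [PseudoMetricSpace X] [MeasurableSpace X] (μ : Measure X) (p : X)

theorem setLIntegral_ball_diff_ball_le_tsum {r : ℝ} (hr : 0 < r) (K : ℕ) (R : ℝ)
    {f : X → ℝ≥0∞} {a : ℕ → ℝ≥0∞} (hf : ∀ (k : ℕ) x, k * r ≤ dist x p → f x ≤ a k) :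
    ∫⁻ x in ball p R \ ball p (K * r), f x ∂μ ≤
      ∑' k, a (k + K) * μ (ball p (min R ((k + K + 1 : ℕ) * r))) := by
  set S : ℕ → Set X := fun k ↦
    {x | ((k + K : ℕ) : ℝ) * r ≤ dist x p} ∩ ball p (min R ((k + K + 1 : ℕ) * r))
  have hcover : ball p R \ ball p (K * r) ⊆ ⋃ k, S k := by
    rintro x ⟨hxR, hxK⟩
    rw [mem_ball, not_lt] at hxK
    have hKj : K ≤ ⌊dist x p / r⌋₊ := Nat.le_floor ((le_div_iff₀ hr).2 hxK)
    refine mem_iUnion.2 ⟨⌊dist x p / r⌋₊ - K, ?_, ?_⟩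
    · rw [mem_ofPred_eq, Nat.sub_add_cancel hKj, ← le_div_iff₀ hr]
      exact Nat.floor_le (div_nonneg dist_nonneg hr.le)
    · rw [Nat.sub_add_cancel hKj, mem_ball, lt_min_iff, Nat.cast_succ, ← div_lt_iff₀ hr]
      exact ⟨hxR, Nat.lt_floor_add_one _⟩
  calc ∫⁻ x in ball p R \ ball p (K * r), f x ∂μ ≤ ∫⁻ x in ⋃ k, S k, f x ∂μ :=
        lintegral_mono_set hcover
    _ ≤ ∑' k, ∫⁻ x in S k, f x ∂μ := lintegral_iUnion_le _ _
    _ ≤ _ := by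
      refine ENNReal.tsum_le_tsum fun k ↦ ?_
      calc ∫⁻ x in S k, f x ∂μ ≤ ∫⁻ _ in S k, a (k + K) ∂μ :=
            setLIntegral_mono measurable_const fun x hx ↦ hf _ x hx.1
        _ = a (k + K) * μ (S k) := setLIntegral_const _ _
        _ ≤ _ := by gcongr; exact inter_subset_right

end Annuli

noncomputable def powMulExpNeg (m j : ℕ) : ℝ≥0∞ := ENNReal.ofReal ((j : ℝ) ^ m * exp (-(j : ℝ)))

theorem tendsto_tsum_powMulExpNeg_nat_add (m : ℕ) :
    Tendsto (fun i ↦ ∑' k, powMulExpNeg m (k + i)) atTop (𝓝 0) := by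
  refine ENNReal.tendsto_sum_nat_add _ ?_
  have hs : Summable fun j : ℕ ↦ (j : ℝ) ^ m * exp (-(j : ℝ)) := by
    simpa using summable_pow_mul_exp_neg_nat_mul m one_pos
  simp only [powMulExpNeg]
  rw [← ENNReal.ofReal_tsum_of_nonneg (fun _ ↦ by positivity) hs]
  exact ENNReal.ofReal_ne_top

theorem pow_le_rpow_four_pi_mul_sq {r : ℝ} (hr : 0 ≤ r) (m : ℕ) :
    r ^ m ≤ (4 * π * r ^ 2) ^ ((m : ℝ) / 2) := by
  calc r ^ m = (r ^ 2) ^ ((m : ℝ) / 2) := by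
        rw [← rpow_natCast r 2, ← rpow_mul hr, ← rpow_natCast]; congr 1; push_cast; ring
    _ ≤ (4 * π * r ^ 2) ^ ((m : ℝ) / 2) := by gcongr; nlinarith [pi_gt_three, sq_nonneg r]

theorem eventually_mul_pow_le_of_tendsto {m : ℕ} {c θ : ℝ} {I : ℝ → ℝ} (hc : 0 < c) (hθ : c ≤ θ)
    (hI : Tendsto (fun r ↦ (4 * π * r ^ 2) ^ (-(m : ℝ) / 2) * I r) (𝓝[>] 0) (𝓝 θ)) :
    ∀ᶠ r in 𝓝[>] 0, c / 2 * r ^ m ≤ I r := by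
  filter_upwards [hI.eventually (eventually_gt_nhds (by linarith : c / 2 < θ)),
    self_mem_nhdsWithin] with r hr (hr0 : 0 < r)
  have hE : 0 < (4 * π * r ^ 2) ^ ((m : ℝ) / 2) := by positivity
  rw [neg_div, rpow_neg (by positivity), inv_mul_eq_div, lt_div_iff₀ hE] at hr
  calc c / 2 * r ^ m ≤ c / 2 * (4 * π * r ^ 2) ^ ((m : ℝ) / 2) := by
        gcongr; exact pow_le_rpow_four_pi_mul_sq hr0.le m
    _ ≤ I r := hr.le

theorem tendsto_exp_neg_sq_div_div_pow {R : ℝ} (hR : R ≠ 0) (m : ℕ) :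
    Tendsto (fun r ↦ exp (-R ^ 2 / (4 * r ^ 2)) / r ^ m) (𝓝[>] 0) (𝓝 0) := by
  have hexp : Tendsto (fun x ↦ exp (-(1 / 2) * x)) atTop (𝓝 0) :=
    tendsto_exp_atBot.comp (tendsto_id.const_mul_atTop_of_neg (by norm_num))
  have h := (rpow_mul_exp_neg_mul_sq_isLittleO_exp_neg (by positivity : 0 < R ^ 2 / 4)
    m).trans_tendsto hexp
  refine (h.comp tendsto_inv_nhdsGT_zero).congr fun r ↦ ?_
  simp only [Function.comp_apply, rpow_natCast, inv_pow]
  rw [div_eq_inv_mul, mul_comm]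
  congr 2
  field_simp

theorem eventually_ofReal_exp_mul_le {R : ℝ} (hR : R ≠ 0) {C : ℝ≥0∞} (hC : C ≠ ∞) (m : ℕ)
    {ε : ℝ} (hε : 0 < ε) :
    ∀ᶠ r in 𝓝[>] 0,
      ENNReal.ofReal (exp (-R ^ 2 / (4 * r ^ 2))) * C ≤ ENNReal.ofReal (ε * r ^ m) := by
  have h := (tendsto_exp_neg_sq_div_div_pow hR m).const_mul C.toReal
  rw [mul_zero] at h
  filter_upwards [h.eventually (eventually_lt_nhds hε), self_mem_nhdsWithin] with r hr (hr0 : 0 < r)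
  rw [← ENNReal.ofReal_toReal hC, ← ENNReal.ofReal_mul (exp_pos _).le]
  refine ENNReal.ofReal_le_ofReal ?_
  rw [← mul_div_assoc, div_lt_iff₀ (by positivity)] at hr
  linarith

theorem exp_neg_sq_div_le_exp_one_sub {r t : ℝ} (hr : 0 < r) {k : ℝ} (hk : k * r ≤ t) :
    exp (-t ^ 2 / (4 * r ^ 2)) ≤ exp (1 - k) := by
  gcongr
  have hkt : k ≤ t / r := (le_div_iff₀ hr).2 hk
  rw [neg_div, neg_le, le_div_iff₀ (by positivity)]
  nlinarith [sq_nonneg (t - 2 * r), mul_le_mul_of_nonneg_right hkt (by positivity : 0 ≤ 4 * r ^ 2),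
    div_mul_cancel₀ t hr.ne']

section Gaussian

variable {E : Type*} [SeminormedAddCommGroup E] [MeasurableSpace E] (μ : Measure E) (p : E)

theorem setLIntegral_ball_diff_ball_gaussian_le {m : ℕ} {Λ R r : ℝ} (hΛ : 0 ≤ Λ) (hR : 0 < R)
    (hr : 0 < r) (K : ℕ) (hball : ∀ s ∈ Ioc 0 R, μ (ball p s) ≤ ENNReal.ofReal (Λ * s ^ m)) :
    ∫⁻ x in ball p R \ ball p (K * r), ENNReal.ofReal (exp (-‖x - p‖ ^ 2 / (4 * r ^ 2))) ∂μ ≤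
      ENNReal.ofReal (r ^ m) *
        (ENNReal.ofReal (Λ * exp 2) * ∑' k, powMulExpNeg m (k + (K + 1))) := by
  refine (setLIntegral_ball_diff_ball_le_tsum μ p hr K R
    (a := fun k ↦ ENNReal.ofReal (exp (1 - k))) fun k x hx ↦ ENNReal.ofReal_le_ofReal ?_).trans ?_
  · exact exp_neg_sq_div_le_exp_one_sub hr (by rwa [← dist_eq_norm])
  rw [← ENNReal.tsum_mul_left, ← ENNReal.tsum_mul_left]
  refine ENNReal.tsum_le_tsum fun k ↦ ?_
  have hs : 0 < min R ((k + K + 1 : ℕ) * r) := lt_min hR (by positivity)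
  calc ENNReal.ofReal (exp (1 - (k + K : ℕ))) * μ (ball p (min R ((k + K + 1 : ℕ) * r)))
      ≤ ENNReal.ofReal (exp (1 - (k + K : ℕ))) *
          ENNReal.ofReal (Λ * ((k + K + 1 : ℕ) * r) ^ m) := by
        gcongr
        refine (hball _ ⟨hs, min_le_left _ _⟩).trans (ENNReal.ofReal_le_ofReal ?_)
        gcongr
        exact min_le_right _ _
    _ = _ := by
        simp only [powMulExpNeg]
        rw [← ENNReal.ofReal_mul (by positivity), ← ENNReal.ofReal_mul (by positivity),
          ← ENNReal.ofReal_mul (by positivity)]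
        congr 1
        rw [mul_pow, show exp (1 - (k + K : ℕ)) = exp 2 * exp (-((k + (K + 1) : ℕ) : ℝ)) by
          rw [← exp_add]; push_cast; ring_nf]
        push_cast
        ring

theorem lintegral_gaussian_le [OpensMeasurableSpace E] {m : ℕ} {Λ R r : ℝ} (hΛ : 0 ≤ Λ)
    (hR : 0 < R) (hr : 0 < r) (K : ℕ)
    (hball : ∀ s ∈ Ioc 0 R, μ (ball p s) ≤ ENNReal.ofReal (Λ * s ^ m)) :
    ∫⁻ x, ENNReal.ofReal (exp (-‖x - p‖ ^ 2 / (4 * r ^ 2))) ∂μ ≤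
      μ (ball p (K * r)) +
        ENNReal.ofReal (r ^ m) *
          (ENNReal.ofReal (Λ * exp 2) * ∑' k, powMulExpNeg m (k + (K + 1))) +
        ENNReal.ofReal (exp (-R ^ 2 / (4 * r ^ 2))) * μ univ := by
  set G : E → ℝ≥0∞ := fun x ↦ ENNReal.ofReal (exp (-‖x - p‖ ^ 2 / (4 * r ^ 2)))
  have hnear : ∫⁻ x in ball p (K * r), G x ∂μ ≤ μ (ball p (K * r)) := by
    refine (setLIntegral_mono measurable_const fun x _ ↦ ?_).trans (setLIntegral_one _).le
    exact ENNReal.ofReal_le_one.2 (exp_le_one_iff.2 (div_nonpos_of_nonpos_of_nonneg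
      (neg_nonpos.2 (sq_nonneg _)) (by positivity)))
  have hfar : ∫⁻ x in (ball p R)ᶜ, G x ∂μ ≤
      ENNReal.ofReal (exp (-R ^ 2 / (4 * r ^ 2))) * μ univ := by
    calc ∫⁻ x in (ball p R)ᶜ, G x ∂μ
        ≤ ∫⁻ _ in (ball p R)ᶜ, ENNReal.ofReal (exp (-R ^ 2 / (4 * r ^ 2))) ∂μ := by
          refine setLIntegral_mono measurable_const fun x hx ↦ ENNReal.ofReal_le_ofReal ?_
          rw [mem_compl_iff, mem_ball, not_lt, dist_eq_norm] at hx
          gcongr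
      _ ≤ _ := by rw [setLIntegral_const]; gcongr; exact subset_univ _
  have hcover : ball p R ⊆ ball p (K * r) ∪ ball p R \ ball p (K * r) := by
    intro x hx
    by_cases h : x ∈ ball p (K * r) <;> simp [*]
  calc ∫⁻ x, G x ∂μ = ∫⁻ x in ball p R, G x ∂μ + ∫⁻ x in (ball p R)ᶜ, G x ∂μ :=
        (lintegral_add_compl G measurableSet_ball).symm
    _ ≤ (∫⁻ x in ball p (K * r), G x ∂μ + ∫⁻ x in ball p R \ ball p (K * r), G x ∂μ) +
          ∫⁻ x in (ball p R)ᶜ, G x ∂μ := by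
        gcongr
        exact (lintegral_mono_set hcover).trans (lintegral_union_le _ _ _)
    _ ≤ _ := by
        gcongr
        exact setLIntegral_ball_diff_ball_gaussian_le μ p hΛ hR hr K hball

theorem eventually_ofReal_le_measure_ball_of_tendsto [OpensMeasurableSpace E] [IsFiniteMeasure μ]
    {m K : ℕ} {Λ c θ R : ℝ} (hΛ : 0 ≤ Λ) (hc : 0 < c) (hR : 0 < R)
    (hK : ENNReal.ofReal (Λ * exp 2) * ∑' k, powMulExpNeg m (k + (K + 1)) ≤ ENNReal.ofReal (c / 8))
    (hball : ∀ s ∈ Ioc 0 R, μ (ball p s) ≤ ENNReal.ofReal (Λ * s ^ m)) (hθ : c ≤ θ)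
    (hlim : Tendsto (fun r ↦ (4 * π * r ^ 2) ^ (-(m : ℝ) / 2) *
      ∫ x, exp (-‖x - p‖ ^ 2 / (4 * r ^ 2)) ∂μ) (𝓝[>] 0) (𝓝 θ)) :
    ∀ᶠ r in 𝓝[>] 0, ENNReal.ofReal (c / 4 * r ^ m) ≤ μ (ball p (K * r)) := by
  filter_upwards [eventually_mul_pow_le_of_tendsto hc hθ hlim,
    eventually_ofReal_exp_mul_le hR.ne' (measure_ne_top μ univ) m (by positivity : 0 < c / 8),
    self_mem_nhdsWithin] with r hlow hfar (hr : 0 < r)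
  rw [integral_eq_lintegral_of_nonneg_ae (ae_of_all _ fun _ ↦ (exp_pos _).le)
    (by fun_prop : Continuous _).aestronglyMeasurable] at hlow
  have hmid : ENNReal.ofReal (r ^ m) *
      (ENNReal.ofReal (Λ * exp 2) * ∑' k, powMulExpNeg m (k + (K + 1))) ≤
      ENNReal.ofReal (c / 8 * r ^ m) := by
    rw [mul_comm (c / 8), ENNReal.ofReal_mul (p := r ^ m) (by positivity)]
    exact mul_le_mul_right hK _
  refine (ENNReal.add_le_add_iff_right (ENNReal.ofReal_ne_top (r := c / 4 * r ^ m))).1 ?_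
  calc ENNReal.ofReal (c / 4 * r ^ m) + ENNReal.ofReal (c / 4 * r ^ m)
      = ENNReal.ofReal (c / 2 * r ^ m) := by
        rw [← ENNReal.ofReal_add (by positivity) (by positivity)]; ring_nf
    _ ≤ ∫⁻ x, ENNReal.ofReal (exp (-‖x - p‖ ^ 2 / (4 * r ^ 2))) ∂μ :=
      ENNReal.ofReal_le_of_le_toReal hlow
    _ ≤ _ := lintegral_gaussian_le μ p hΛ hR hr K hball
    _ ≤ μ (ball p (K * r)) + ENNReal.ofReal (c / 8 * r ^ m) + ENNReal.ofReal (c / 8 * r ^ m) := by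
      gcongr
    _ = μ (ball p (K * r)) + ENNReal.ofReal (c / 4 * r ^ m) := by
      rw [add_assoc, ← ENNReal.ofReal_add (by positivity) (by positivity)]; ring_nf

end Gaussian

/-- If `μ(B_r(p)) ≤ Λ r^{n−2}` for small `r` and the averaged Gaussian density
`(4πr²)^{-(n-2)/2} ∫ e^{-|x−p|²/(4r²)} dμ` tends to a limit `θ ≥ c > 0` as `r → 0`,
then the Euclidean lower `(n−2)`-density at `p` is bounded below by a constant
`c' > 0` depending only on `n, Λ, c`. -/
theorem stmt12 (n : ℕ) (hn : 3 ≤ n) (Λ c : ℝ) (hΛ : 0 < Λ) (hc : 0 < c) :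
    ∃ c' : ℝ, 0 < c' ∧
      ∀ (μ : Measure (EuclideanSpace ℝ (Fin n))) (_ : IsFiniteMeasure μ)
        (p : EuclideanSpace ℝ (Fin n)) (r₀ : ℝ), 0 < r₀ →
        (∀ r ∈ Set.Ioc (0 : ℝ) r₀,
            μ (Metric.ball p r) ≤ ENNReal.ofReal (Λ * r ^ (n - 2))) →
        ∀ θ : ℝ, c ≤ θ →
          Tendsto (fun r : ℝ =>
              (4 * Real.pi * r ^ 2) ^ (-((n : ℝ) - 2) / 2) *
                ∫ x, Real.exp (-‖x - p‖ ^ 2 / (4 * r ^ 2)) ∂μ)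
            (nhdsWithin 0 (Set.Ioi 0)) (nhds θ) →
          ∃ r₁ : ℝ, 0 < r₁ ∧ ∀ r ∈ Set.Ioo (0 : ℝ) r₁,
            ENNReal.ofReal (c' * r ^ (n - 2)) ≤ μ (Metric.ball p r) := by
  obtain ⟨m, rfl⟩ : ∃ m, n = m + 2 := ⟨n - 2, by omega⟩
  have hm : ((m + 2 : ℕ) : ℝ) - 2 = m := by push_cast; ring
  simp only [hm, Nat.add_sub_cancel]
  obtain ⟨K, hK1, hK⟩ : ∃ K : ℕ, 1 ≤ K ∧ ENNReal.ofReal (Λ * exp 2) *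
      ∑' k, powMulExpNeg m (k + (K + 1)) ≤ ENNReal.ofReal (c / 8) := by
    have h := ENNReal.Tendsto.const_mul ((tendsto_tsum_powMulExpNeg_nat_add m).comp
      (tendsto_add_atTop_nat 1)) (Or.inr (ENNReal.ofReal_ne_top (r := Λ * exp 2)))
    rw [mul_zero] at h
    exact ((eventually_ge_atTop 1).and
      (h.eventually (Iic_mem_nhds (by positivity)))).exists
  have hK0 : (0 : ℝ) < K := by exact_mod_cast hK1
  refine ⟨c / 4 / K ^ m, by positivity, fun μ _ p r₀ hr₀ hball θ hθ hlim ↦ ?_⟩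
  obtain ⟨u, hu, hsub⟩ := mem_nhdsGT_iff_exists_Ioo_subset.1
    (eventually_ofReal_le_measure_ball_of_tendsto μ p hΛ.le hc hr₀ hK hball hθ hlim)
  refine ⟨K * u, mul_pos hK0 hu, fun s ⟨hs, hsu⟩ ↦ ?_⟩
  have h := hsub ⟨div_pos hs hK0, (div_lt_iff₀' hK0).2 hsu⟩
  rw [mem_ofPred_eq, mul_div_cancel₀ _ hK0.ne', div_pow, ← mul_div_assoc] at h
  rwa [div_mul_eq_mul_div]
end
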